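/- arXiv:2109.03129 — 3 statements merged into one kernel-verified Lean document; each statement's English description precedes it below -/
import Mathlib

section
/- Let n > 2 and let G be a simple graph on n vertices with s(G) = s(n). Let x be an entrywise-nonnegative unit eigenvector of the adjacency matrix A(G) for the eigenvalue λ₁(G) and let z be a unit eigenvector for λₙ(G). Then: (i) for all distinct vertices u, v, if x_u x_v − z_u z_v > 0 then uv ∈ E(G), and if x_u x_v − z_u z_v < 0 then uv ∉ E(G); (ii) for all distinct u, v, x_u x_v − z_u z_v ≠ 0 (so uv ∈ E(G) if and only if x_u x_v − z_u z_v > 0); (iii) setting P := {u : z_u ≥ 0} and N := V(G) ∖ P, every vertex of P is adjacent to every vertex of N, i.e., G is the join of the induced subgraphs G[P] and G[N]. -/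
/-!
Toggling a pair `uv` changes `A(G)` by `±(e_u e_vᵀ + e_v e_uᵀ)`, hence changes `xᵀAx − zᵀAz`
by `±2 (x_u x_v − z_u z_v)`. By the Rayleigh principle `xᵀAx − zᵀAz` never exceeds the spread,
and for `G` itself it equals `s(G)`, so maximality of `s(G)` gives the sign condition (i).
If `x_u x_v = z_u z_v`, the toggled graph also attains its spread at `x`, `z`, so `x` and `z`
are eigenvectors of its adjacency matrix as well as of `A(G)`, hence of the edge matrix of `uv`.
When `x_u x_v ≠ 0` this confines `x` and `z` to `{u, v}` and forces `s(G) = 0`, absurd;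
otherwise it gives `x_u = z_u = 0`, and then the same argument for every pair `wu` kills `x`.
Part (iii) follows from (i), (ii) and `x ≥ 0`.
-/

open scoped Classical in
noncomputable def adjMat {n : ℕ} (G : SimpleGraph (Fin n)) : Matrix (Fin n) (Fin n) ℝ :=
  fun i j => if G.Adj i j then 1 else 0

lemma adjMat_isHermitian {n : ℕ} (G : SimpleGraph (Fin n)) :
    (adjMat G).IsHermitian := by
  classical
  unfold Matrix.IsHermitian
  ext i j
  simp only [Matrix.conjTranspose_apply, adjMat]
  rw [show star (if G.Adj j i then (1:ℝ) else 0) = (if G.Adj j i then (1:ℝ) else 0) from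
    star_trivial _]
  exact if_congr (G.adj_comm j i) rfl rfl

noncomputable def graphEigs {n : ℕ} (G : SimpleGraph (Fin n)) : Fin n → ℝ :=
  (adjMat_isHermitian G).eigenvalues

/-- `λ₁(G)`, the largest adjacency eigenvalue. -/
noncomputable def lamMax {n : ℕ} (G : SimpleGraph (Fin n)) : ℝ := ⨆ i, graphEigs G i

/-- `λₙ(G)`, the smallest adjacency eigenvalue. -/
noncomputable def lamMin {n : ℕ} (G : SimpleGraph (Fin n)) : ℝ := ⨅ i, graphEigs G i

noncomputable def spread {n : ℕ} (G : SimpleGraph (Fin n)) : ℝ := lamMax G - lamMin G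

open Matrix

namespace Matrix.IsHermitian

variable {ι : Type*} [Fintype ι] [DecidableEq ι] {A : Matrix ι ι ℝ} (hA : A.IsHermitian)

lemma smul_add_smul_one_eq (a b : ℝ) :
    a • A + b • 1 = (hA.eigenvectorUnitary : Matrix ι ι ℝ) *
      diagonal (fun i => a * hA.eigenvalues i + b) *
        star (hA.eigenvectorUnitary : Matrix ι ι ℝ) := by
  set U : Matrix ι ι ℝ := ↑hA.eigenvectorUnitary
  have hU : U * star U = 1 := Unitary.mul_star_self_of_mem hA.eigenvectorUnitary.2
  have hD : diagonal (fun i => a * hA.eigenvalues i + b) = a • diagonal hA.eigenvalues + b • 1 := by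
    rw [smul_one_eq_diagonal, ← diagonal_smul, diagonal_add]
    rfl
  conv_lhs => rw [hA.spectral_theorem]
  rw [hD, mul_add, add_mul, mul_smul_comm, smul_mul_assoc, mul_smul_comm, mul_one, smul_mul_assoc,
    hU]
  simp [Unitary.conjStarAlgAut_apply, U]

lemma posSemidef_smul_add_smul_one {a b : ℝ} (h : ∀ i, 0 ≤ a * hA.eigenvalues i + b) :
    (a • A + b • 1).PosSemidef := by
  rw [hA.smul_add_smul_one_eq, Unitary.isUnit_coe.posSemidef_star_right_conjugate_iff,
    posSemidef_diagonal_iff]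
  exact h

lemma dotProduct_mulVec_le_of_eigenvalues_le {c : ℝ} (hc : ∀ i, hA.eigenvalues i ≤ c)
    (x : ι → ℝ) :
    x ⬝ᵥ A *ᵥ x ≤ c * (x ⬝ᵥ x) := by
  have := (hA.posSemidef_smul_add_smul_one (a := -1) (b := c) fun i => by linarith [hc i])
    |>.dotProduct_mulVec_nonneg x
  simp only [star_trivial, add_mulVec, smul_mulVec, one_mulVec, dotProduct_add,
    dotProduct_smul, smul_eq_mul] at this
  linarith

lemma le_dotProduct_mulVec_of_le_eigenvalues {c : ℝ} (hc : ∀ i, c ≤ hA.eigenvalues i)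
    (x : ι → ℝ) :
    c * (x ⬝ᵥ x) ≤ x ⬝ᵥ A *ᵥ x := by
  have := (hA.posSemidef_smul_add_smul_one (a := 1) (b := -c) fun i => by linarith [hc i])
    |>.dotProduct_mulVec_nonneg x
  simp only [star_trivial, add_mulVec, smul_mulVec, one_mulVec, dotProduct_add,
    dotProduct_smul, smul_eq_mul] at this
  linarith

lemma mulVec_eq_smul_of_dotProduct_mulVec_eq_of_eigenvalues_le {c : ℝ}
    (hc : ∀ i, hA.eigenvalues i ≤ c) {x : ι → ℝ} (hx : x ⬝ᵥ A *ᵥ x = c * (x ⬝ᵥ x)) :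
    A *ᵥ x = c • x := by
  have := (hA.posSemidef_smul_add_smul_one (a := -1) (b := c) fun i => by linarith [hc i])
    |>.dotProduct_mulVec_zero_iff x
  simp only [star_trivial, add_mulVec, smul_mulVec, one_mulVec, dotProduct_add,
    dotProduct_smul, smul_eq_mul, hx] at this
  have h := this.1 (by ring)
  rwa [neg_one_smul, neg_add_eq_zero] at h

lemma mulVec_eq_smul_of_dotProduct_mulVec_eq_of_le_eigenvalues {c : ℝ}
    (hc : ∀ i, c ≤ hA.eigenvalues i) {x : ι → ℝ} (hx : x ⬝ᵥ A *ᵥ x = c * (x ⬝ᵥ x)) :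
    A *ᵥ x = c • x := by
  have := (hA.posSemidef_smul_add_smul_one (a := 1) (b := -c) fun i => by linarith [hc i])
    |>.dotProduct_mulVec_zero_iff x
  simp only [star_trivial, add_mulVec, smul_mulVec, one_mulVec, dotProduct_add,
    dotProduct_smul, smul_eq_mul, hx] at this
  have h := this.1 (by ring)
  rwa [one_smul, neg_smul, ← sub_eq_add_neg, sub_eq_zero] at h

end Matrix.IsHermitian

namespace Matrix

variable {ι : Type*} [Fintype ι]

lemma mulVec_eq_smul_of_add_smul_mulVec_eq_smul {A E : Matrix ι ι ℝ} {w : ι → ℝ} {ε μ ν : ℝ}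
    (hε : ε ≠ 0) (hw : w ⬝ᵥ w = 1) (hA : A *ᵥ w = μ • w) (hAE : (A + ε • E) *ᵥ w = ν • w) :
    E *ᵥ w = (w ⬝ᵥ E *ᵥ w) • w := by
  have hE : E *ᵥ w = (ε⁻¹ * (ν - μ)) • w := by
    ext i
    have := congrFun hAE i
    simp only [add_mulVec, hA, smul_mulVec, Pi.add_apply, Pi.smul_apply, smul_eq_mul] at this ⊢
    field_simp
    linarith
  rw [hE, dotProduct_smul, hw, smul_eq_mul, mul_one]

end Matrix

section AdjacencyMatrix

open scoped Classical symmDiff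
open SimpleGraph

variable {n : ℕ}

lemma adjMat_apply (G : SimpleGraph (Fin n)) (a b : Fin n) :
    adjMat G a b = if G.Adj a b then 1 else 0 :=
  rfl

lemma adjMat_apply_self (G : SimpleGraph (Fin n)) (a : Fin n) : adjMat G a a = 0 := by
  simp [adjMat_apply]

lemma lamMin_le_graphEigs (G : SimpleGraph (Fin n)) (i : Fin n) : lamMin G ≤ graphEigs G i :=
  ciInf_le (Set.finite_range _).bddBelow i

lemma graphEigs_le_lamMax (G : SimpleGraph (Fin n)) (i : Fin n) : graphEigs G i ≤ lamMax G :=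
  le_ciSup (Set.finite_range _).bddAbove i

lemma dotProduct_adjMat_mulVec_le_lamMax (G : SimpleGraph (Fin n)) (x : Fin n → ℝ) :
    x ⬝ᵥ adjMat G *ᵥ x ≤ lamMax G * (x ⬝ᵥ x) :=
  (adjMat_isHermitian G).dotProduct_mulVec_le_of_eigenvalues_le (graphEigs_le_lamMax G) x

lemma lamMin_le_dotProduct_adjMat_mulVec (G : SimpleGraph (Fin n)) (x : Fin n → ℝ) :
    lamMin G * (x ⬝ᵥ x) ≤ x ⬝ᵥ adjMat G *ᵥ x :=
  (adjMat_isHermitian G).le_dotProduct_mulVec_of_le_eigenvalues (lamMin_le_graphEigs G) x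

lemma adjMat_comm (G : SimpleGraph (Fin n)) (a b : Fin n) : adjMat G a b = adjMat G b a := by
  simp only [adjMat_apply, G.adj_comm]

lemma adjMat_edge_mulVec {u v : Fin n} (huv : u ≠ v) (x : Fin n → ℝ) :
    adjMat (edge u v) *ᵥ x = Pi.single u (x v) + Pi.single v (x u) := by
  ext a
  by_cases hau : a = u
  · subst hau
    simp [mulVec, dotProduct, adjMat_apply, edge_adj, huv, ite_and]
  by_cases hav : a = v
  · subst hav
    simp [mulVec, dotProduct, adjMat_apply, edge_adj, hau, ite_and]
  · simp [mulVec, dotProduct, adjMat_apply, edge_adj, hau, hav]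

lemma eq_zero_of_adjMat_edge_mulVec_eq_smul {u v a : Fin n} {w : Fin n → ℝ} {μ : ℝ} (huv : u ≠ v)
    (hμ : μ ≠ 0) (h : adjMat (edge u v) *ᵥ w = μ • w) (hau : a ≠ u) (hav : a ≠ v) : w a = 0 := by
  have := congrFun h a
  rw [adjMat_edge_mulVec huv] at this
  simp only [Pi.add_apply, Pi.single_eq_of_ne hau, Pi.single_eq_of_ne hav, add_zero, Pi.smul_apply,
    smul_eq_mul, zero_eq_mul] at this
  exact this.resolve_left hμ

lemma dotProduct_adjMat_edge_mulVec {u v : Fin n} (huv : u ≠ v) (x : Fin n → ℝ) :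
    x ⬝ᵥ adjMat (edge u v) *ᵥ x = 2 * (x u * x v) := by
  rw [adjMat_edge_mulVec huv, dotProduct_add, dotProduct_single, dotProduct_single]
  ring

lemma adjMat_symmDiff_edge (G : SimpleGraph (Fin n)) {u v : Fin n} (huv : u ≠ v) :
    adjMat (G ∆ edge u v) = adjMat G + (if G.Adj u v then (-1 : ℝ) else 1) • adjMat (edge u v) := by
  ext a b
  by_cases he : (edge u v).Adj a b
  · obtain ⟨⟨rfl, rfl⟩ | ⟨rfl, rfl⟩, -⟩ := (edge_adj _ _ _ _).1 he
    · by_cases h : G.Adj a b <;> simp [adjMat_apply, symmDiff, he, h]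
    · by_cases h : G.Adj a b <;> simp [adjMat_apply, symmDiff, he, h, G.adj_comm]
  · simp [adjMat_apply, symmDiff, he, apply_ite (fun M : Matrix (Fin n) (Fin n) ℝ => M a b)]

lemma dotProduct_adjMat_mulVec_of_eq_zero (G : SimpleGraph (Fin n)) {u v : Fin n} (huv : u ≠ v)
    {x : Fin n → ℝ} (hx : ∀ a, a ≠ u → a ≠ v → x a = 0) :
    x ⬝ᵥ adjMat G *ᵥ x = 2 * adjMat G u v * (x u * x v) := by
  obtain ⟨p, q, rfl⟩ : ∃ p q, x = Pi.single u p + Pi.single v q := by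
    refine ⟨x u, x v, funext fun a => ?_⟩
    by_cases hau : a = u
    · subst hau; simp [huv]
    by_cases hav : a = v
    · subst hav; simp [hau]
    simp [hau, hav, hx a hau hav]
  simp only [mulVec_add, dotProduct_add, add_dotProduct, single_dotProduct, mulVec_single,
    Pi.smul_apply, col_apply, op_smul_eq_mul, adjMat_apply_self, adjMat_comm G v u, Pi.add_apply,
    Pi.single_eq_same, Pi.single_eq_of_ne huv, Pi.single_eq_of_ne huv.symm]
  ring

end AdjacencyMatrix

section Spread

open scoped Classical symmDiff
open SimpleGraph

variable {n : ℕ}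

noncomputable def rayleighGap (H : SimpleGraph (Fin n)) (x z : Fin n → ℝ) : ℝ :=
  x ⬝ᵥ adjMat H *ᵥ x - z ⬝ᵥ adjMat H *ᵥ z

lemma rayleighGap_le_spread (H : SimpleGraph (Fin n)) {x z : Fin n → ℝ} (hx : x ⬝ᵥ x = 1)
    (hz : z ⬝ᵥ z = 1) : rayleighGap H x z ≤ spread H := by
  have hmax := dotProduct_adjMat_mulVec_le_lamMax H x
  have hmin := lamMin_le_dotProduct_adjMat_mulVec H z
  rw [hx, mul_one] at hmax
  rw [hz, mul_one] at hmin
  rw [rayleighGap, spread]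
  linarith

lemma mulVec_eq_of_rayleighGap_eq_spread (H : SimpleGraph (Fin n)) {x z : Fin n → ℝ}
    (hx : x ⬝ᵥ x = 1) (hz : z ⬝ᵥ z = 1) (h : rayleighGap H x z = spread H) :
    adjMat H *ᵥ x = lamMax H • x ∧ adjMat H *ᵥ z = lamMin H • z := by
  have hmax := dotProduct_adjMat_mulVec_le_lamMax H x
  have hmin := lamMin_le_dotProduct_adjMat_mulVec H z
  rw [hx, mul_one] at hmax
  rw [hz, mul_one] at hmin
  rw [rayleighGap, spread] at h
  constructor
  · refine (adjMat_isHermitian H).mulVec_eq_smul_of_dotProduct_mulVec_eq_of_eigenvalues_le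
      (graphEigs_le_lamMax H) ?_
    rw [hx]
    linarith
  · refine (adjMat_isHermitian H).mulVec_eq_smul_of_dotProduct_mulVec_eq_of_le_eigenvalues
      (lamMin_le_graphEigs H) ?_
    rw [hz]
    linarith

lemma rayleighGap_symmDiff_edge (G : SimpleGraph (Fin n)) {u v : Fin n} (huv : u ≠ v)
    (x z : Fin n → ℝ) :
    rayleighGap (G ∆ edge u v) x z =
      rayleighGap G x z + 2 * (if G.Adj u v then (-1 : ℝ) else 1) * (x u * x v - z u * z v) := by
  simp only [rayleighGap, adjMat_symmDiff_edge G huv, add_mulVec, smul_mulVec, dotProduct_add,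
    dotProduct_smul, smul_eq_mul, dotProduct_adjMat_edge_mulVec huv]
  ring

lemma two_le_spread_of_adj {H : SimpleGraph (Fin n)} {u v : Fin n} (h : H.Adj u v) :
    2 ≤ spread H := by
  have huv := H.ne_of_adj h
  have hA : adjMat H u v = 1 := by simp [adjMat_apply, h]
  have hquad (s : ℝ) {w : Fin n → ℝ} (hw : w = Pi.single u 1 + Pi.single v s) :
      w ⬝ᵥ adjMat H *ᵥ w = 2 * s ∧ w ⬝ᵥ w = 1 + s ^ 2 := by
    subst hw
    constructor
    · rw [dotProduct_adjMat_mulVec_of_eq_zero H huv fun a hau hav => by simp [hau, hav]]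
      simp [hA, huv, huv.symm]
    · simp [dotProduct_add, huv, huv.symm, sq]
  have hmax := dotProduct_adjMat_mulVec_le_lamMax H (Pi.single u 1 + Pi.single v 1)
  have hmin := lamMin_le_dotProduct_adjMat_mulVec H (Pi.single u 1 + Pi.single v (-1))
  rw [(hquad 1 rfl).1, (hquad 1 rfl).2] at hmax
  rw [(hquad (-1) rfl).1, (hquad (-1) rfl).2] at hmin
  rw [spread]
  linarith

structure IsSpreadExtremal (G : SimpleGraph (Fin n)) (x z : Fin n → ℝ) : Prop where
  spread_le : ∀ H : SimpleGraph (Fin n), spread H ≤ spread G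
  dotProduct_self_left : x ⬝ᵥ x = 1
  dotProduct_self_right : z ⬝ᵥ z = 1
  mulVec_left : adjMat G *ᵥ x = lamMax G • x
  mulVec_right : adjMat G *ᵥ z = lamMin G • z

namespace IsSpreadExtremal

variable {G : SimpleGraph (Fin n)} {x z : Fin n → ℝ} {u v : Fin n}

lemma rayleighGap_eq (hp : IsSpreadExtremal G x z) : rayleighGap G x z = spread G := by
  rw [rayleighGap, hp.mulVec_left, hp.mulVec_right, dotProduct_smul, dotProduct_smul,
    hp.dotProduct_self_left, hp.dotProduct_self_right, smul_eq_mul, smul_eq_mul, mul_one, mul_one,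
    spread]

lemma rayleighGap_le (hp : IsSpreadExtremal G x z) (H : SimpleGraph (Fin n)) :
    rayleighGap H x z ≤ rayleighGap G x z :=
  hp.rayleighGap_eq ▸
    (rayleighGap_le_spread H hp.dotProduct_self_left hp.dotProduct_self_right).trans
      (hp.spread_le H)

lemma sign_mul_nonpos (hp : IsSpreadExtremal G x z) (huv : u ≠ v) :
    (if G.Adj u v then (-1 : ℝ) else 1) * (x u * x v - z u * z v) ≤ 0 := by
  have := hp.rayleighGap_le (G ∆ edge u v)
  rw [rayleighGap_symmDiff_edge G huv] at this
  linarith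

lemma adj_of_pos (hp : IsSpreadExtremal G x z) (huv : u ≠ v)
    (h : 0 < x u * x v - z u * z v) : G.Adj u v := by
  by_contra hadj
  have := hp.sign_mul_nonpos huv
  rw [if_neg hadj] at this
  linarith

lemma not_adj_of_neg (hp : IsSpreadExtremal G x z) (huv : u ≠ v)
    (h : x u * x v - z u * z v < 0) : ¬G.Adj u v := by
  intro hadj
  have := hp.sign_mul_nonpos huv
  rw [if_pos hadj] at this
  linarith

lemma adjMat_edge_mulVec_eq_smul (hp : IsSpreadExtremal G x z) (huv : u ≠ v)
    (h : x u * x v = z u * z v) :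
    adjMat (edge u v) *ᵥ x = (2 * (x u * x v)) • x ∧
      adjMat (edge u v) *ᵥ z = (2 * (z u * z v)) • z := by
  have hgap : rayleighGap (G ∆ edge u v) x z = spread (G ∆ edge u v) := by
    refine le_antisymm (rayleighGap_le_spread _ hp.dotProduct_self_left hp.dotProduct_self_right) ?_
    rw [rayleighGap_symmDiff_edge G huv, h, sub_self, mul_zero, add_zero, hp.rayleighGap_eq]
    exact hp.spread_le _
  obtain ⟨hx, hz⟩ := mulVec_eq_of_rayleighGap_eq_spread _ hp.dotProduct_self_left
    hp.dotProduct_self_right hgap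
  have hε : (if G.Adj u v then (-1 : ℝ) else 1) ≠ 0 := by split_ifs <;> norm_num
  rw [adjMat_symmDiff_edge G huv] at hx hz
  rw [← dotProduct_adjMat_edge_mulVec huv x, ← dotProduct_adjMat_edge_mulVec huv z]
  exact ⟨mulVec_eq_smul_of_add_smul_mulVec_eq_smul hε hp.dotProduct_self_left hp.mulVec_left hx,
    mulVec_eq_smul_of_add_smul_mulVec_eq_smul hε hp.dotProduct_self_right hp.mulVec_right hz⟩

lemma mul_eq_zero_of_mul_eq (hp : IsSpreadExtremal G x z) (huv : u ≠ v)
    (h : x u * x v = z u * z v) : x u * x v = 0 := by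
  by_contra hc
  obtain ⟨hx, hz⟩ := hp.adjMat_edge_mulVec_eq_smul huv h
  have hcx : 2 * (x u * x v) ≠ 0 := mul_ne_zero two_ne_zero hc
  have hcz : 2 * (z u * z v) ≠ 0 := h ▸ hcx
  have hgap : rayleighGap G x z = 0 := by
    rw [rayleighGap,
      dotProduct_adjMat_mulVec_of_eq_zero G huv fun _ =>
        eq_zero_of_adjMat_edge_mulVec_eq_smul huv hcx hx,
      dotProduct_adjMat_mulVec_of_eq_zero G huv fun _ =>
        eq_zero_of_adjMat_edge_mulVec_eq_smul huv hcz hz, h, sub_self]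
  have := (two_le_spread_of_adj ((edge_adj _ _ _ _).2 ⟨Or.inl ⟨rfl, rfl⟩, huv⟩)).trans
    (hp.spread_le (edge u v))
  rw [← hp.rayleighGap_eq, hgap] at this
  norm_num at this

lemma eq_zero_of_mul_eq (hp : IsSpreadExtremal G x z) (huv : u ≠ v)
    (h : x u * x v = z u * z v) : x u = 0 ∧ z u = 0 := by
  have hc := hp.mul_eq_zero_of_mul_eq huv h
  obtain ⟨hx, hz⟩ := hp.adjMat_edge_mulVec_eq_smul huv h
  rw [hc, mul_zero, zero_smul] at hx
  rw [← h, hc, mul_zero, zero_smul] at hz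
  have hxv := congrFun hx v
  have hzv := congrFun hz v
  rw [adjMat_edge_mulVec huv] at hxv hzv
  simp only [Pi.add_apply, Pi.single_eq_of_ne huv.symm, Pi.single_eq_same, zero_add,
    Pi.zero_apply] at hxv hzv
  exact ⟨hxv, hzv⟩

lemma mul_sub_mul_ne_zero (hp : IsSpreadExtremal G x z) (huv : u ≠ v) :
    x u * x v - z u * z v ≠ 0 := by
  intro h
  obtain ⟨hxu, hzu⟩ := hp.eq_zero_of_mul_eq huv (sub_eq_zero.1 h)
  have hx : ∀ w, x w = 0 := by
    intro w
    rcases eq_or_ne w u with rfl | hwu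
    · exact hxu
    exact (hp.eq_zero_of_mul_eq hwu (by rw [hxu, hzu, mul_zero, mul_zero])).1
  have := hp.dotProduct_self_left
  simp [dotProduct, hx] at this

lemma adj_of_nonneg_of_neg (hp : IsSpreadExtremal G x z) (hx : ∀ a, 0 ≤ x a) (hu : 0 ≤ z u)
    (hv : z v < 0) : G.Adj u v := by
  have huv : u ≠ v := by rintro rfl; linarith
  refine hp.adj_of_pos huv (lt_of_le_of_ne ?_ (hp.mul_sub_mul_ne_zero huv).symm)
  nlinarith [mul_nonneg (hx u) (hx v)]

end IsSpreadExtremal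

end Spread

theorem spread_extremal_structure_general {n : ℕ} (G : SimpleGraph (Fin n))
    (hmax : ∀ H : SimpleGraph (Fin n), spread H ≤ spread G)
    (x z : Fin n → ℝ)
    (hxnonneg : ∀ u, 0 ≤ x u)
    (hxunit : ∑ u, x u ^ 2 = 1) (hzunit : ∑ u, z u ^ 2 = 1)
    (hxeig : (adjMat G).mulVec x = lamMax G • x)
    (hzeig : (adjMat G).mulVec z = lamMin G • z) :
    (∀ u v : Fin n, u ≠ v →
      (0 < x u * x v - z u * z v → G.Adj u v) ∧
      (x u * x v - z u * z v < 0 → ¬ G.Adj u v)) ∧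
    (∀ u v : Fin n, u ≠ v → x u * x v - z u * z v ≠ 0) ∧
    (∀ u v : Fin n, 0 ≤ z u → z v < 0 → G.Adj u v) := by
  have hp : IsSpreadExtremal G x z :=
    ⟨hmax, by simpa [dotProduct, sq] using hxunit, by simpa [dotProduct, sq] using hzunit,
      hxeig, hzeig⟩
  exact ⟨fun u v huv => ⟨hp.adj_of_pos huv, hp.not_adj_of_neg huv⟩,
    fun u v huv => hp.mul_sub_mul_ne_zero huv,
    fun u v hu hv => hp.adj_of_nonneg_of_neg hxnonneg hu hv⟩

/-- Structure of spread-extremal graphs: edges are determined by the sign of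
`x_u x_v − z_u z_v`, this quantity is never zero on distinct pairs, and every
vertex with `z_u ≥ 0` is adjacent to every vertex with `z_v < 0` (so `G` is
the join of the induced subgraphs on `P = {z ≥ 0}` and `N = {z < 0}`). -/
theorem spread_extremal_structure {n : ℕ} (hn : 2 < n) (G : SimpleGraph (Fin n))
    (hmax : ∀ H : SimpleGraph (Fin n), spread H ≤ spread G)
    (x z : Fin n → ℝ)
    (hxnonneg : ∀ u, 0 ≤ x u)
    (hxunit : ∑ u, x u ^ 2 = 1) (hzunit : ∑ u, z u ^ 2 = 1)
    (hxeig : (adjMat G).mulVec x = lamMax G • x)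
    (hzeig : (adjMat G).mulVec z = lamMin G • z) :
    (∀ u v : Fin n, u ≠ v →
      (0 < x u * x v - z u * z v → G.Adj u v) ∧
      (x u * x v - z u * z v < 0 → ¬ G.Adj u v)) ∧
    (∀ u v : Fin n, u ≠ v → x u * x v - z u * z v ≠ 0) ∧
    (∀ u v : Fin n, 0 ≤ z u → z v < 0 → G.Adj u v) :=
  spread_extremal_structure_general G hmax x z hxnonneg hxunit hzunit hxeig hzeig
end

section
/- Let W be a connected graphon, i.e., there is no Lebesgue-measurable set A ⊆ [0,1] with 0 < m(A) < 1 such that W = 0 a.e. on A × ([0,1] ∖ A). Let f ∈ L²[0,1] with ‖f‖₂ = 1 be a μ(W)-eigenfunction of W, that is, ∫₀¹ W(x,y)f(y) dy = μ(W)·f(x) for a.e. x. Then f has constant sign almost everywhere: either f > 0 a.e. on [0,1] or f < 0 a.e. on [0,1]. -/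
open MeasureTheory

/-- Lebesgue measure restricted to the unit square `[0,1]²`. -/
noncomputable def unitSq : Measure (ℝ × ℝ) :=
  volume.restrict (Set.Icc (0 : ℝ) 1 ×ˢ Set.Icc (0 : ℝ) 1)

/-- Lebesgue measure restricted to the unit interval `[0,1]`. -/
noncomputable def unitInt : Measure ℝ := volume.restrict (Set.Icc (0 : ℝ) 1)

/-- A graphon: a measurable function with values in `[0,1]` which is symmetric
almost everywhere on `[0,1]²`. -/
def IsGraphon (W : ℝ → ℝ → ℝ) : Prop :=
  Measurable (Function.uncurry W) ∧ (∀ x y, W x y ∈ Set.Icc (0 : ℝ) 1) ∧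
    (∀ᵐ p : ℝ × ℝ ∂unitSq, W p.1 p.2 = W p.2 p.1)

/-- A unit function of `L²[0,1]`: measurable with `∫₀¹ f² = 1`. -/
def IsUnitL2 (f : ℝ → ℝ) : Prop :=
  Measurable f ∧ (∫ x in Set.Icc (0 : ℝ) 1, (f x) ^ 2) = 1

/-- The quadratic form `∫₀¹∫₀¹ W(x,y) f(x) f(y) dx dy`. -/
noncomputable def quadForm (W : ℝ → ℝ → ℝ) (f : ℝ → ℝ) : ℝ :=
  ∫ x in Set.Icc (0 : ℝ) 1, ∫ y in Set.Icc (0 : ℝ) 1, W x y * f x * f y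

/-- `μ(W)`, the maximum eigenvalue of the kernel operator associated to `W`. -/
noncomputable def graphonMu (W : ℝ → ℝ → ℝ) : ℝ :=
  sSup {r : ℝ | ∃ f : ℝ → ℝ, IsUnitL2 f ∧ r = quadForm W f}

/-- `ν(W)`, the minimum eigenvalue of the kernel operator associated to `W`. -/
noncomputable def graphonNu (W : ℝ → ℝ → ℝ) : ℝ :=
  sInf {r : ℝ | ∃ f : ℝ → ℝ, IsUnitL2 f ∧ r = quadForm W f}

/-- The spread `spr(W) = μ(W) − ν(W)` of a graphon. -/
noncomputable def graphonSpr (W : ℝ → ℝ → ℝ) : ℝ := graphonMu W - graphonNu W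

/-- `f` is a `lam`-eigenfunction of the kernel operator of `W`. -/
def IsEigenfunction (W : ℝ → ℝ → ℝ) (lam : ℝ) (f : ℝ → ℝ) : Prop :=
  ∀ᵐ x ∂unitInt, (∫ y in Set.Icc (0 : ℝ) 1, W x y * f y) = lam * f x

/-! Since `W ≥ 0`, `|f|` is again a unit maximiser of the quadratic form, so
`W(x,y) (|f x| |f y| - f x f y) = 0` almost everywhere. Perturbing `|f|` in the direction of the
indicator of the zero set `Z` of `f` cannot increase the Rayleigh quotient; to first order this
says `∫_Z ∫ W(x,y) |f y| = 0`, so `W` vanishes on `Z × Zᶜ`, and connectivity together with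
`‖f‖₂ = 1` forces `m(Z) = 0`. Then `W` vanishes on `{f > 0} × {f < 0}`, and connectivity leaves
only one sign. -/

open Set Filter Topology

def IsConnectedGraphon (W : ℝ → ℝ → ℝ) : Prop :=
  ¬ ∃ A : Set ℝ, MeasurableSet A ∧ A ⊆ Icc (0 : ℝ) 1 ∧ 0 < volume A ∧ volume A < 1 ∧
    (∀ᵐ p : ℝ × ℝ ∂(volume.restrict (A ×ˢ (Icc (0 : ℝ) 1 \ A))), W p.1 p.2 = 0)

noncomputable def kernelForm (W : ℝ → ℝ → ℝ) (u v : ℝ → ℝ) : ℝ :=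
  ∫ p, W p.1 p.2 * u p.1 * v p.2 ∂(unitInt.prod unitInt)

instance : IsProbabilityMeasure unitInt := ⟨by simp [unitInt]⟩

lemma unitInt_prod_unitInt :
    unitInt.prod unitInt = volume.restrict (Icc (0 : ℝ) 1 ×ˢ Icc (0 : ℝ) 1) := by
  rw [unitInt, Measure.prod_restrict, ← Measure.volume_eq_prod]

lemma IsUnitL2.memLp {f : ℝ → ℝ} (hf : IsUnitL2 f) : MemLp f 2 unitInt := by
  refine (memLp_two_iff_integrable_sq hf.1.aestronglyMeasurable).2 (by_contra fun h => ?_)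
  exact zero_ne_one ((integral_undef h).symm.trans hf.2)

lemma IsUnitL2.abs {f : ℝ → ℝ} (hf : IsUnitL2 f) : IsUnitL2 fun x => |f x| :=
  ⟨hf.1.abs, by simpa only [sq_abs] using hf.2⟩

lemma IsUnitL2.not_ae_eq_zero {f : ℝ → ℝ} (hf : IsUnitL2 f) : ¬ ∀ᵐ x ∂unitInt, f x = 0 := by
  intro h
  have : ∫ x, f x ^ 2 ∂unitInt = 0 :=
    integral_eq_zero_of_ae (by filter_upwards [h] with x hx; simp [hx])
  exact zero_ne_one (this.symm.trans hf.2)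

lemma integrable_kernel_mul_mul {α β : Type*} [MeasurableSpace α] [MeasurableSpace β]
    {μ : Measure α} {ν : Measure β} {K : α → β → ℝ} {C : ℝ}
    (hKm : AEStronglyMeasurable (Function.uncurry K) (μ.prod ν)) (hK : ∀ x y, ‖K x y‖ ≤ C)
    {u : α → ℝ} {v : β → ℝ} (hu : Integrable u μ) (hv : Integrable v ν) :
    Integrable (fun p => K p.1 p.2 * u p.1 * v p.2) (μ.prod ν) := by
  simpa only [mul_assoc, Function.uncurry_def] using
    (hu.mul_prod hv).bdd_mul hKm (ae_of_all _ fun p => hK p.1 p.2)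

section Kernel

variable {W : ℝ → ℝ → ℝ}

lemma norm_le_one_of_mem_Icc (hW : ∀ x y, W x y ∈ Icc (0 : ℝ) 1) (x y : ℝ) : ‖W x y‖ ≤ 1 :=
  abs_le.2 ⟨by linarith [(hW x y).1], (hW x y).2⟩

lemma integrable_graphon_mul_mul (hWm : Measurable (Function.uncurry W))
    (hW : ∀ x y, W x y ∈ Icc (0 : ℝ) 1) {u v : ℝ → ℝ}
    (hu : Integrable u unitInt) (hv : Integrable v unitInt) :
    Integrable (fun p : ℝ × ℝ => W p.1 p.2 * u p.1 * v p.2) (unitInt.prod unitInt) :=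
  integrable_kernel_mul_mul hWm.aestronglyMeasurable (norm_le_one_of_mem_Icc hW) hu hv

lemma quadForm_eq_kernelForm (hWm : Measurable (Function.uncurry W))
    (hW : ∀ x y, W x y ∈ Icc (0 : ℝ) 1) {u : ℝ → ℝ} (hu : Integrable u unitInt) :
    quadForm W u = kernelForm W u u :=
  integral_integral (f := fun x y => W x y * u x * u y) (integrable_graphon_mul_mul hWm hW hu hu)

lemma kernelForm_nonneg (hW : ∀ x y, 0 ≤ W x y) {u v : ℝ → ℝ} (hu : 0 ≤ u) (hv : 0 ≤ v) :
    0 ≤ kernelForm W u v :=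
  integral_nonneg fun p => mul_nonneg (mul_nonneg (hW p.1 p.2) (hu p.1)) (hv p.2)

lemma kernelForm_add_mul_self (hWm : Measurable (Function.uncurry W))
    (hW : ∀ x y, W x y ∈ Icc (0 : ℝ) 1) {g h : ℝ → ℝ}
    (hg : Integrable g unitInt) (hh : Integrable h unitInt) (ε : ℝ) :
    kernelForm W (fun x => g x + ε * h x) (fun x => g x + ε * h x) =
      kernelForm W g g + ε * (kernelForm W g h + kernelForm W h g) + ε ^ 2 * kernelForm W h h := by
  have hgg := integrable_graphon_mul_mul hWm hW hg hg
  have hgh := integrable_graphon_mul_mul hWm hW hg hh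
  have hhg := integrable_graphon_mul_mul hWm hW hh hg
  have hhh := integrable_graphon_mul_mul hWm hW hh hh
  have expand : ∀ p : ℝ × ℝ, W p.1 p.2 * (g p.1 + ε * h p.1) * (g p.2 + ε * h p.2) =
      W p.1 p.2 * g p.1 * g p.2 + ε * (W p.1 p.2 * g p.1 * h p.2) +
        ε * (W p.1 p.2 * h p.1 * g p.2) + ε ^ 2 * (W p.1 p.2 * h p.1 * h p.2) :=
    fun p => by ring
  simp only [kernelForm, expand]
  rw [integral_add, integral_add, integral_add, integral_const_mul, integral_const_mul,
    integral_const_mul]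
  · ring
  all_goals fun_prop

lemma quadForm_const_mul (c : ℝ) (u : ℝ → ℝ) :
    quadForm W (fun x => c * u x) = c ^ 2 * quadForm W u := by
  simp only [quadForm, ← integral_const_mul]
  congr 1 with x
  congr 1 with y
  ring

lemma quadForm_le_integral_sq (hWm : Measurable (Function.uncurry W))
    (hW : ∀ x y, W x y ∈ Icc (0 : ℝ) 1) {u : ℝ → ℝ} (hu : MemLp u 2 unitInt) :
    quadForm W u ≤ ∫ x, u x ^ 2 ∂unitInt := by
  have hu1 := hu.integrable one_le_two
  calc quadForm W u = kernelForm W u u := quadForm_eq_kernelForm hWm hW hu1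
    _ ≤ ∫ p, |u p.1| * |u p.2| ∂(unitInt.prod unitInt) := by
      refine integral_mono (integrable_graphon_mul_mul hWm hW hu1 hu1)
        (hu1.abs.mul_prod hu1.abs) fun p => ?_
      calc W p.1 p.2 * u p.1 * u p.2 ≤ |W p.1 p.2| * |u p.1| * |u p.2| := by
            simpa only [abs_mul] using le_abs_self (W p.1 p.2 * u p.1 * u p.2)
        _ ≤ 1 * |u p.1| * |u p.2| := by
            gcongr; exact norm_le_one_of_mem_Icc hW p.1 p.2
        _ = |u p.1| * |u p.2| := by rw [one_mul]
    _ = (∫ x, |u x| ∂unitInt) ^ 2 := by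
      rw [integral_prod_mul (fun x => |u x|) (fun x => |u x|), sq]
    _ ≤ ∫ x, |u x| ^ 2 ∂unitInt := by
      have := ProbabilityTheory.variance_nonneg |u| unitInt
      rw [ProbabilityTheory.variance_eq_sub hu.abs] at this
      simpa only [Pi.pow_apply, Pi.abs_apply, sub_nonneg] using this
    _ = ∫ x, u x ^ 2 ∂unitInt := by simp only [sq_abs]

lemma bddAbove_quadForm (hWm : Measurable (Function.uncurry W))
    (hW : ∀ x y, W x y ∈ Icc (0 : ℝ) 1) :
    BddAbove {r : ℝ | ∃ f : ℝ → ℝ, IsUnitL2 f ∧ r = quadForm W f} := by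
  refine ⟨1, ?_⟩
  rintro _ ⟨f, hf, rfl⟩
  exact (quadForm_le_integral_sq hWm hW hf.memLp).trans_eq hf.2

lemma quadForm_le_graphonMu (hWm : Measurable (Function.uncurry W))
    (hW : ∀ x y, W x y ∈ Icc (0 : ℝ) 1) {u : ℝ → ℝ} (hu : IsUnitL2 u) :
    quadForm W u ≤ graphonMu W :=
  le_csSup (bddAbove_quadForm hWm hW) ⟨u, hu, rfl⟩

lemma quadForm_le_graphonMu_mul (hWm : Measurable (Function.uncurry W))
    (hW : ∀ x y, W x y ∈ Icc (0 : ℝ) 1) {u : ℝ → ℝ} (hu : Measurable u)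
    (hu2 : MemLp u 2 unitInt) :
    quadForm W u ≤ graphonMu W * ∫ x, u x ^ 2 ∂unitInt := by
  rcases (integral_nonneg fun x => sq_nonneg (u x) : 0 ≤ ∫ x, u x ^ 2 ∂unitInt).eq_or_lt
    with hs | hs
  · have hu0 : ∀ᵐ x ∂unitInt, u x = 0 := by
      filter_upwards [(integral_eq_zero_iff_of_nonneg (fun x => sq_nonneg (u x))
        hu2.integrable_sq).1 hs.symm] with x hx using pow_eq_zero_iff two_ne_zero |>.1 hx
    rw [← hs, mul_zero]
    exact (integral_eq_zero_of_ae (by filter_upwards [hu0] with x hx; simp [hx])).le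
  · set s := ∫ x, u x ^ 2 ∂unitInt
    have hunit : IsUnitL2 fun x => (√s)⁻¹ * u x := by
      refine ⟨hu.const_mul _, ?_⟩
      have hsq : ∀ x, ((√s)⁻¹ * u x) ^ 2 = s⁻¹ * u x ^ 2 := fun x => by
        rw [mul_pow, inv_pow, Real.sq_sqrt hs.le]
      simp only [hsq]
      exact (integral_const_mul _ _).trans (inv_mul_cancel₀ hs.ne')
    have := quadForm_le_graphonMu hWm hW hunit
    rw [quadForm_const_mul, inv_pow, Real.sq_sqrt hs.le, inv_mul_le_iff₀ hs] at this
    linarith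

lemma IsEigenfunction.quadForm_eq {lam : ℝ} {f : ℝ → ℝ} (h : IsEigenfunction W lam f) :
    quadForm W f = lam * ∫ x in Icc (0 : ℝ) 1, f x ^ 2 := by
  rw [← integral_const_mul]
  refine integral_congr_ae ?_
  filter_upwards [h] with x hx
  simp only [mul_right_comm (W x _) (f x), integral_mul_const, hx]
  ring

lemma quadForm_abs_sub_quadForm (hWm : Measurable (Function.uncurry W))
    (hW : ∀ x y, W x y ∈ Icc (0 : ℝ) 1) {f : ℝ → ℝ} (hf : Integrable f unitInt) :
    quadForm W (fun x => |f x|) - quadForm W f =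
      ∫ p, (W p.1 p.2 * |f p.1| * |f p.2| - W p.1 p.2 * f p.1 * f p.2) ∂(unitInt.prod unitInt) := by
  rw [quadForm_eq_kernelForm hWm hW hf, quadForm_eq_kernelForm hWm hW hf.abs, kernelForm,
    kernelForm, integral_sub (integrable_graphon_mul_mul hWm hW hf.abs hf.abs)
      (integrable_graphon_mul_mul hWm hW hf hf)]

lemma mul_abs_mul_abs_sub_mul_mul_nonneg (hW : ∀ x y, 0 ≤ W x y) (f : ℝ → ℝ) :
    0 ≤ fun p : ℝ × ℝ => W p.1 p.2 * |f p.1| * |f p.2| - W p.1 p.2 * f p.1 * f p.2 := by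
  intro p
  simp only [Pi.zero_apply, sub_nonneg, mul_assoc, ← abs_mul]
  exact mul_le_mul_of_nonneg_left (le_abs_self _) (hW p.1 p.2)

lemma quadForm_le_quadForm_abs (hWm : Measurable (Function.uncurry W))
    (hW : ∀ x y, W x y ∈ Icc (0 : ℝ) 1) {f : ℝ → ℝ} (hf : Integrable f unitInt) :
    quadForm W f ≤ quadForm W (fun x => |f x|) :=
  sub_nonneg.1 <| (quadForm_abs_sub_quadForm hWm hW hf).symm ▸
    integral_nonneg (mul_abs_mul_abs_sub_mul_mul_nonneg (fun x y => (hW x y).1) f)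

lemma ae_mul_mul_eq_mul_abs_mul_abs (hWm : Measurable (Function.uncurry W))
    (hW : ∀ x y, W x y ∈ Icc (0 : ℝ) 1) {f : ℝ → ℝ} (hf : Integrable f unitInt)
    (h : quadForm W (fun x => |f x|) ≤ quadForm W f) :
    ∀ᵐ p ∂(unitInt.prod unitInt),
      W p.1 p.2 * f p.1 * f p.2 = W p.1 p.2 * |f p.1| * |f p.2| := by
  have hD := mul_abs_mul_abs_sub_mul_mul_nonneg (fun x y => (hW x y).1) f
  have hzero := (integral_eq_zero_iff_of_nonneg hD
    ((integrable_graphon_mul_mul hWm hW hf.abs hf.abs).sub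
      (integrable_graphon_mul_mul hWm hW hf hf))).1
    (((quadForm_abs_sub_quadForm hWm hW hf).symm.trans_le (sub_nonpos.2 h)).antisymm
      (integral_nonneg hD))
  filter_upwards [hzero] with p hp
  exact (sub_eq_zero.1 hp).symm

lemma kernelForm_add_kernelForm_swap_nonpos (hWm : Measurable (Function.uncurry W))
    (hW : ∀ x y, W x y ∈ Icc (0 : ℝ) 1) {g h : ℝ → ℝ}
    (hg : IsUnitL2 g) (hmax : graphonMu W ≤ quadForm W g) (hh : Measurable h)
    (hh2 : MemLp h 2 unitInt) (hgh : ∀ᵐ x ∂unitInt, g x * h x = 0) :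
    kernelForm W g h + kernelForm W h g ≤ 0 := by
  have hg2 := hg.memLp
  have hg1 := hg2.integrable one_le_two
  have hh1 := hh2.integrable one_le_two
  set C := graphonMu W * ∫ x, h x ^ 2 ∂unitInt - kernelForm W h h
  -- as `g h = 0`, the competitor `g + ε h` has squared norm `1 + O(ε²)`,
  -- but its form is `μ + ε (B(g,h) + B(h,g)) + O(ε²)`
  have key : ∀ ε > 0, kernelForm W g h + kernelForm W h g ≤ ε * C := by
    intro ε hε
    have hu := quadForm_le_graphonMu_mul (u := fun x => g x + ε * h x) hWm hW
      (hg.1.add (hh.const_mul ε)) (hg2.add (hh2.const_mul ε))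
    have hg21 : ∫ x, g x ^ 2 ∂unitInt = 1 := hg.2
    have hsq : ∫ x, (g x + ε * h x) ^ 2 ∂unitInt =
        1 + ε ^ 2 * ∫ x, h x ^ 2 ∂unitInt := by
      rw [← hg21, ← integral_const_mul, ← integral_add hg2.integrable_sq
        (hh2.integrable_sq.const_mul _)]
      refine integral_congr_ae ?_
      filter_upwards [hgh] with x hx
      linear_combination 2 * ε * hx
    rw [quadForm_eq_kernelForm (u := fun x => g x + ε * h x) hWm hW (hg1.add (hh1.const_mul ε)),
      kernelForm_add_mul_self hWm hW hg1 hh1, hsq] at hu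
    rw [quadForm_eq_kernelForm hWm hW hg1] at hmax
    nlinarith
  have hlim : Tendsto (fun ε => ε * C) (𝓝[>] 0) (𝓝 0) :=
    tendsto_nhdsWithin_of_tendsto_nhds (by simpa using (continuous_mul_const C).tendsto 0)
  exact ge_of_tendsto hlim (eventually_nhdsWithin_of_forall key)

lemma IsConnectedGraphon.ae_notMem_or_ae_mem (hconn : IsConnectedGraphon W)
    {A : Set ℝ} (hA : MeasurableSet A)
    (hcut : ∀ᵐ p ∂(unitInt.prod unitInt), p.1 ∈ A → p.2 ∉ A → W p.1 p.2 = 0) :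
    (∀ᵐ x ∂unitInt, x ∉ A) ∨ ∀ᵐ x ∂unitInt, x ∈ A := by
  have hvol : volume (A ∩ Icc 0 1) = unitInt A := (Measure.restrict_apply hA).symm
  rw [ae_iff, ae_iff]
  simp only [not_not, ofPred_mem_eq]
  by_contra! h
  refine hconn ⟨A ∩ Icc 0 1, hA.inter measurableSet_Icc, inter_subset_right,
    hvol ▸ pos_iff_ne_zero.2 h.1, hvol ▸ ?_, ?_⟩
  · exact (prob_le_one).lt_of_ne fun h1 => h.2 ((prob_compl_eq_zero_iff hA).2 h1)
  · rw [sdiff_inter_self_eq_sdiff]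
    have hsub : (A ∩ Icc 0 1) ×ˢ (Icc 0 1 \ A) ⊆ Icc (0 : ℝ) 1 ×ˢ Icc (0 : ℝ) 1 :=
      prod_mono inter_subset_right sdiff_subset
    filter_upwards [ae_restrict_of_ae_restrict_of_subset hsub (unitInt_prod_unitInt ▸ hcut),
      ae_restrict_mem ((hA.inter measurableSet_Icc).prod (measurableSet_Icc.diff hA))]
      with p hp hmem
    exact hp hmem.1.1 hmem.2.2

lemma ae_pos_of_graphonMu_le_quadForm (hconn : IsConnectedGraphon W)
    (hWm : Measurable (Function.uncurry W)) (hW : ∀ x y, W x y ∈ Icc (0 : ℝ) 1) {g : ℝ → ℝ}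
    (hg : IsUnitL2 g) (hg0 : 0 ≤ g) (hmax : graphonMu W ≤ quadForm W g) :
    ∀ᵐ x ∂unitInt, 0 < g x := by
  set Z := {x | g x = 0}
  have hZ : MeasurableSet Z := hg.1 (measurableSet_singleton 0)
  set h := Z.indicator fun _ => (1 : ℝ)
  have hh0 : 0 ≤ h := indicator_nonneg fun _ _ => zero_le_one
  have hgh : ∀ x, g x * h x = 0 := fun x => by
    by_cases hx : x ∈ Z
    · rw [show g x = 0 from hx, zero_mul]
    · rw [show h x = 0 from indicator_of_notMem hx _, mul_zero]
  have hW0 : ∀ x y, 0 ≤ W x y := fun x y => (hW x y).1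
  have hsum := kernelForm_add_kernelForm_swap_nonpos hWm hW hg hmax
    (measurable_const.indicator hZ) ((memLp_const 1).indicator hZ) (ae_of_all _ hgh)
  have hhg : kernelForm W h g = 0 :=
    le_antisymm (by linarith [kernelForm_nonneg hW0 hg0 hh0]) (kernelForm_nonneg hW0 hh0 hg0)
  have hcut : ∀ᵐ p ∂(unitInt.prod unitInt), p.1 ∈ Z → p.2 ∉ Z → W p.1 p.2 = 0 := by
    have hint := integrable_graphon_mul_mul hWm hW
      ((integrable_const (1 : ℝ)).indicator hZ) (hg.memLp.integrable one_le_two)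
    filter_upwards [(integral_eq_zero_iff_of_nonneg
      (fun (p : ℝ × ℝ) => mul_nonneg (mul_nonneg (hW0 p.1 p.2) (hh0 p.1)) (hg0 p.2)) hint).1 hhg]
      with p hp h1 h2
    simp only [h, indicator_of_mem h1, mul_one] at hp
    exact (mul_eq_zero.1 hp).resolve_right h2
  refine (hconn.ae_notMem_or_ae_mem hZ hcut).resolve_right (fun h => hg.not_ae_eq_zero h) |>.mono
    fun x hx => (hg0 x).lt_of_ne (Ne.symm hx)

end Kernel

/-- Perron–Frobenius for connected graphons: a unit eigenfunction for the top
eigenvalue `μ(W)` has constant sign almost everywhere. -/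
theorem graphon_perron_frobenius (W : ℝ → ℝ → ℝ) (hW : IsGraphon W)
    (hconn : ¬ ∃ A : Set ℝ, MeasurableSet A ∧ A ⊆ Set.Icc (0 : ℝ) 1 ∧
      0 < volume A ∧ volume A < 1 ∧
      (∀ᵐ p : ℝ × ℝ ∂(volume.restrict (A ×ˢ (Set.Icc (0 : ℝ) 1 \ A))), W p.1 p.2 = 0))
    (f : ℝ → ℝ) (hf : IsUnitL2 f)
    (heig : IsEigenfunction W (graphonMu W) f) :
    (∀ᵐ x ∂unitInt, 0 < f x) ∨ (∀ᵐ x ∂unitInt, f x < 0) := by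
  obtain ⟨hWm, hW, -⟩ := hW
  have hf1 := hf.memLp.integrable one_le_two
  have hfQ : quadForm W f = graphonMu W := by rw [heig.quadForm_eq, hf.2, mul_one]
  have hsign := ae_mul_mul_eq_mul_abs_mul_abs hWm hW hf1
    (hfQ ▸ quadForm_le_graphonMu hWm hW hf.abs)
  have hne : ∀ᵐ x ∂unitInt, 0 < |f x| := ae_pos_of_graphonMu_le_quadForm hconn hWm hW hf.abs
    (fun x => abs_nonneg (f x)) (hfQ ▸ quadForm_le_quadForm_abs hWm hW hf1)
  have hcut : ∀ᵐ p ∂(unitInt.prod unitInt),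
      p.1 ∈ {x | 0 < f x} → p.2 ∉ {x | 0 < f x} → W p.1 p.2 = 0 := by
    filter_upwards [hsign, Measure.quasiMeasurePreserving_snd.ae hne] with p hp hp2 h1 h2
    have h2' : f p.2 < 0 := (not_lt.1 h2).lt_of_ne (abs_pos.1 hp2)
    rw [abs_of_pos h1, abs_of_neg h2'] at hp
    have : W p.1 p.2 * (f p.1 * f p.2) = 0 := by linarith
    exact (mul_eq_zero.1 this).resolve_right (mul_ne_zero h1.ne' h2'.ne)
  refine (IsConnectedGraphon.ae_notMem_or_ae_mem hconn (measurableSet_lt measurable_const hf.1)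
    hcut).symm.imp id fun h => ?_
  filter_upwards [h, hne] with x h1 h2
  exact (not_lt.1 h1).lt_of_ne (abs_pos.1 h2)
end

section
/- Let W : [0,1]² → [0,1] be defined by W(x,y) = 0 if (x,y) ∈ [2/3,1]×[2/3,1] and W(x,y) = 1 otherwise. Then μ(W) = (1+√3)/3 and ν(W) = (1−√3)/3; in particular, spr(W) = 2/√3. -/
open MeasureTheory

/-!
For `f` on `[0,1]` put `a = ∫_{[0,2/3)} f` and `b = ∫_{[2/3,1]} f`. Since `W = 1 - 𝟙_B ⊗ 𝟙_B` with
`B = [2/3,1]`, the quadratic form only sees these two numbers: it equals `(a + b)² - b² = a² + 2ab`.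
Cauchy–Schwarz on the two pieces gives `3a²/2 + 3b² ≤ ∫ f² = 1`, with equality for functions
constant on each piece. So `μ` and `ν` are the extreme values of `a² + 2ab` on that
ellipse, namely the generalized eigenvalues `(1 ± √3)/3` of `[[1, 1], [1, 0]]` relative to
`diag (3/2, 3)`, attained by unit step functions.
-/

open Set
open scoped ENNReal

theorem sq_setIntegral_le_measureReal_mul_setIntegral_sq {α : Type*} [MeasurableSpace α]
    {μ : Measure α} {s : Set α} {f : α → ℝ} (hs : μ s ≠ ∞) (hf : IntegrableOn f s μ)
    (hf2 : IntegrableOn (fun x => f x ^ 2) s μ) :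
    (∫ x in s, f x ∂μ) ^ 2 ≤ μ.real s * ∫ x in s, f x ^ 2 ∂μ := by
  rcases eq_or_ne (μ s) 0 with h0 | h0
  · simp [Measure.restrict_eq_zero.mpr h0]
  have hpos : 0 < μ.real s := ENNReal.toReal_pos h0 hs
  have hjensen := (even_two.convexOn_pow (𝕜 := ℝ)).map_set_average_le (continuousOn_pow 2)
    isClosed_univ h0 hs (by simp) hf hf2
  rwa [setAverage_eq, setAverage_eq, smul_eq_mul, smul_eq_mul, mul_pow, inv_pow, sq (μ.real s),
    mul_inv, mul_assoc, mul_le_mul_iff_right₀ (inv_pos.2 hpos), inv_mul_le_iff₀ hpos] at hjensen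

theorem setIntegral_Icc_eq_Ico_add_Icc {a b c : ℝ} (hab : a ≤ b) (hbc : b ≤ c) {g : ℝ → ℝ}
    (hg : IntegrableOn g (Icc a c)) :
    ∫ x in Icc a c, g x = (∫ x in Ico a b, g x) + ∫ x in Icc b c, g x := by
  rw [← Ico_union_Icc_eq_Icc hab hbc] at hg ⊢
  exact setIntegral_union (disjoint_left.2 fun _ hx hx' => hx.2.not_ge hx'.1) measurableSet_Icc
    (hg.mono_set subset_union_left) (hg.mono_set subset_union_right)

theorem IsUnitL2.integrableOn_sq {f : ℝ → ℝ} (hf : IsUnitL2 f) :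
    IntegrableOn (fun x => f x ^ 2) (Icc 0 1) := by
  by_contra h
  simpa [integral_undef h] using hf.2

theorem IsUnitL2.integrableOn {f : ℝ → ℝ} (hf : IsUnitL2 f) : IntegrableOn f (Icc 0 1) :=
  ((memLp_two_iff_integrable_sq hf.1.aestronglyMeasurable).2 hf.integrableOn_sq).integrable
    one_le_two

theorem quadForm_eq_sq_sub_sq {W : ℝ → ℝ → ℝ} {B : Set ℝ} (hB : MeasurableSet B)
    (hBI : B ⊆ Icc 0 1) (hW0 : ∀ x ∈ B, ∀ y ∈ B, W x y = 0)
    (hW1 : ∀ x y, ¬(x ∈ B ∧ y ∈ B) → W x y = 1) {f : ℝ → ℝ} (hf : IntegrableOn f (Icc 0 1)) :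
    quadForm W f = (∫ x in Icc (0 : ℝ) 1, f x) ^ 2 - (∫ x in B, f x) ^ 2 := by
  set g := B.indicator f
  have hW : ∀ x y, W x y * f x * f y = f x * f y - g x * g y := by
    intro x y
    by_cases hx : x ∈ B <;> by_cases hy : y ∈ B
    · simp [g, hW0 x hx y hy, hx, hy]
    all_goals simp [g, hW1 x y (by tauto), hx, hy]
  have hg : IntegrableOn g (Icc 0 1) := hf.indicator hB
  have hgB : ∫ x in Icc (0 : ℝ) 1, g x = ∫ x in B, f x := by
    rw [setIntegral_indicator hB, inter_eq_right.2 hBI]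
  have hinner : ∀ x, ∫ y in Icc (0 : ℝ) 1, (f x * f y - g x * g y)
      = f x * (∫ y in Icc (0 : ℝ) 1, f y) - g x * ∫ y in Icc (0 : ℝ) 1, g y := fun x => by
    rw [integral_sub (hf.const_mul _) (hg.const_mul _), integral_const_mul, integral_const_mul]
  simp only [quadForm, hW, hinner]
  rw [integral_sub (hf.mul_const _) (hg.mul_const _), integral_mul_const, integral_mul_const, hgB]
  ring

theorem quadForm_eq_sq_add_two_mul {W : ℝ → ℝ → ℝ}
    (hW0 : ∀ x ∈ Icc (2/3 : ℝ) 1, ∀ y ∈ Icc (2/3 : ℝ) 1, W x y = 0)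
    (hW1 : ∀ x y : ℝ, ¬(x ∈ Icc (2/3 : ℝ) 1 ∧ y ∈ Icc (2/3 : ℝ) 1) → W x y = 1)
    {f : ℝ → ℝ} (hf : IntegrableOn f (Icc 0 1)) :
    quadForm W f = (∫ x in Ico (0 : ℝ) (2/3), f x) ^ 2
      + 2 * (∫ x in Ico (0 : ℝ) (2/3), f x) * ∫ x in Icc (2/3 : ℝ) 1, f x := by
  rw [quadForm_eq_sq_sub_sq measurableSet_Icc (Icc_subset_Icc (by norm_num) le_rfl) hW0 hW1 hf,
    setIntegral_Icc_eq_Ico_add_Icc (b := 2/3) (by norm_num) (by norm_num) hf]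
  ring

theorem IsUnitL2.three_halves_mul_sq_add_three_mul_sq_le_one {f : ℝ → ℝ} (hf : IsUnitL2 f) :
    3/2 * (∫ x in Ico (0 : ℝ) (2/3), f x) ^ 2 + 3 * (∫ x in Icc (2/3 : ℝ) 1, f x) ^ 2 ≤ 1 := by
  have hAI : Ico (0 : ℝ) (2/3) ⊆ Icc 0 1 :=
    Ico_subset_Icc_self.trans (Icc_subset_Icc_right (by norm_num))
  have hBI : Icc (2/3 : ℝ) 1 ⊆ Icc 0 1 := Icc_subset_Icc_left (by norm_num)
  have hA := sq_setIntegral_le_measureReal_mul_setIntegral_sq measure_Ico_lt_top.ne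
    (hf.integrableOn.mono_set hAI) (hf.integrableOn_sq.mono_set hAI)
  have hB := sq_setIntegral_le_measureReal_mul_setIntegral_sq measure_Icc_lt_top.ne
    (hf.integrableOn.mono_set hBI) (hf.integrableOn_sq.mono_set hBI)
  have hnorm := hf.2
  rw [setIntegral_Icc_eq_Ico_add_Icc (b := 2/3) (by norm_num) (by norm_num) hf.integrableOn_sq]
    at hnorm
  norm_num [Real.volume_real_Ico, Real.volume_real_Icc] at hA hB
  linarith

theorem sq_add_two_mul_mem_Icc {a b : ℝ} (h : 3/2 * a ^ 2 + 3 * b ^ 2 ≤ 1) :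
    a ^ 2 + 2 * a * b ∈ Icc ((1 - √3) / 3) ((1 + √3) / 3) := by
  have hs2 : √3 ^ 2 = 3 := Real.sq_sqrt (by norm_num)
  have hs1 : 0 ≤ √3 - 1 := by nlinarith [Real.sqrt_nonneg 3]
  have hs1' : 0 ≤ √3 + 1 := by linarith
  -- at `λ = (1 ± √3)/3` the form `λ (3a²/2 + 3b²) - (a² + 2ab)` is rank one: ± a square
  constructor
  · linear_combination mul_nonneg hs1' (sq_nonneg (a + (√3 - 1) * b)) / 2
      + mul_le_mul_of_nonneg_left h hs1 / 3 + (a * b + (√3 - 1) * b ^ 2 / 2) * hs2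
  · linear_combination mul_nonneg hs1 (sq_nonneg (a - (√3 + 1) * b)) / 2
      + mul_le_mul_of_nonneg_left h hs1' / 3 - (a * b - (√3 + 1) * b ^ 2 / 2) * hs2

noncomputable def stepFn (α β : ℝ) (x : ℝ) : ℝ := if x < 2/3 then α else β

theorem measurable_stepFn (α β : ℝ) : Measurable (stepFn α β) :=
  Measurable.ite measurableSet_Iio measurable_const measurable_const

theorem integrableOn_stepFn (α β : ℝ) : IntegrableOn (stepFn α β) (Icc 0 1) :=
  IntegrableOn.of_bound measure_Icc_lt_top (measurable_stepFn α β).aestronglyMeasurable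
    (max |α| |β|) (Filter.Eventually.of_forall fun x => by unfold stepFn; split_ifs <;> simp)

theorem setIntegral_Ico_stepFn (α β : ℝ) : ∫ x in Ico (0 : ℝ) (2/3), stepFn α β x = 2/3 * α := by
  rw [setIntegral_congr_fun (f := stepFn α β) (g := fun _ => α) measurableSet_Ico
    fun x hx => if_pos hx.2, setIntegral_const]
  norm_num

theorem setIntegral_Icc_stepFn (α β : ℝ) : ∫ x in Icc (2/3 : ℝ) 1, stepFn α β x = 1/3 * β := by
  rw [setIntegral_congr_fun (f := stepFn α β) (g := fun _ => β) measurableSet_Icc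
    fun x hx => if_neg hx.1.not_gt, setIntegral_const]
  norm_num

theorem isUnitL2_stepFn {α β : ℝ} (h : 2/3 * α ^ 2 + 1/3 * β ^ 2 = 1) :
    IsUnitL2 (stepFn α β) := by
  have hsq : (fun x => stepFn α β x ^ 2) = stepFn (α ^ 2) (β ^ 2) :=
    funext fun x => apply_ite (· ^ 2) _ _ _
  refine ⟨measurable_stepFn α β, ?_⟩
  rw [hsq, setIntegral_Icc_eq_Ico_add_Icc (b := 2/3) (by norm_num) (by norm_num)
    (integrableOn_stepFn _ _), setIntegral_Ico_stepFn, setIntegral_Icc_stepFn, h]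

theorem exists_isUnitL2_quadForm_eq {W : ℝ → ℝ → ℝ}
    (hW0 : ∀ x ∈ Icc (2/3 : ℝ) 1, ∀ y ∈ Icc (2/3 : ℝ) 1, W x y = 0)
    (hW1 : ∀ x y : ℝ, ¬(x ∈ Icc (2/3 : ℝ) 1 ∧ y ∈ Icc (2/3 : ℝ) 1) → W x y = 1) (t : ℝ) :
    ∃ f, IsUnitL2 f ∧ quadForm W f = 4 * (1 + t) / (3 * (2 + t ^ 2)) := by
  set α := √(3 / (2 + t ^ 2))
  have hα : α ^ 2 = 3 / (2 + t ^ 2) := Real.sq_sqrt (by positivity)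
  have ht : 2 + t ^ 2 ≠ 0 := by positivity
  refine ⟨stepFn α (t * α), isUnitL2_stepFn ?_, ?_⟩
  · rw [mul_pow, hα]
    field_simp
  · rw [quadForm_eq_sq_add_two_mul hW0 hW1 (integrableOn_stepFn _ _), setIntegral_Ico_stepFn,
      setIntegral_Icc_stepFn, show (2/3 * α) ^ 2 + 2 * (2/3 * α) * (1/3 * (t * α))
        = 4/9 * (1 + t) * α ^ 2 by ring, hα]
    field_simp
    ring

/-- The extremal graphon, vanishing on `[2/3,1]²` and equal to `1` elsewhere, has
`μ = (1+√3)/3`, `ν = (1−√3)/3`, and spread `2/√3`. -/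
theorem extremal_stepgraphon_eigenvalues (W : ℝ → ℝ → ℝ)
    (hW0 : ∀ x ∈ Set.Icc (2/3 : ℝ) 1, ∀ y ∈ Set.Icc (2/3 : ℝ) 1, W x y = 0)
    (hW1 : ∀ x y : ℝ, ¬(x ∈ Set.Icc (2/3 : ℝ) 1 ∧ y ∈ Set.Icc (2/3 : ℝ) 1) → W x y = 1) :
    graphonMu W = (1 + Real.sqrt 3) / 3 ∧
    graphonNu W = (1 - Real.sqrt 3) / 3 ∧
    graphonSpr W = 2 / Real.sqrt 3 := by
  have hbounds : ∀ r ∈ {r | ∃ f, IsUnitL2 f ∧ r = quadForm W f},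
      r ∈ Icc ((1 - √3) / 3) ((1 + √3) / 3) := by
    rintro _ ⟨f, hf, rfl⟩
    rw [quadForm_eq_sq_add_two_mul hW0 hW1 hf.integrableOn]
    exact sq_add_two_mul_mem_Icc hf.three_halves_mul_sq_add_three_mul_sq_le_one
  have hs2 : √3 ^ 2 = 3 := Real.sq_sqrt (by norm_num)
  have hs : √3 ≠ 0 := by positivity
  obtain ⟨fmax, hfmax, hmax⟩ := exists_isUnitL2_quadForm_eq hW0 hW1 (√3 - 1)
  obtain ⟨fmin, hfmin, hmin⟩ := exists_isUnitL2_quadForm_eq hW0 hW1 (-1 - √3)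
  have hmu : graphonMu W = (1 + √3) / 3 := by
    refine IsGreatest.csSup_eq ⟨⟨fmax, hfmax, ?_⟩, fun r hr => (hbounds r hr).2⟩
    rw [hmax]
    field_simp
    linear_combination (√3 - 1) * hs2
  have hnu : graphonNu W = (1 - √3) / 3 := by
    refine IsLeast.csInf_eq ⟨⟨fmin, hfmin, ?_⟩, fun r hr => (hbounds r hr).1⟩
    rw [hmin]
    field_simp
    linear_combination (-1 - √3) * hs2
  refine ⟨hmu, hnu, ?_⟩
  rw [graphonSpr, hmu, hnu]
  field_simp
  linear_combination 2 * hs2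
end
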